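/- arXiv:1307.6316 — 2 statements merged into one kernel-verified Lean document; each statement's English description precedes it below -/
import Mathlib

section
/- Let C = {v₀, ..., v_d} be the vertex set of a d-simplex in ℝ^d, k ≥ 1, and A a finite subset of conv(C). Then |A + kC| = C(d+k, k)·|A| - Σ_{i=1}^{|A ∩ C|} ( C(d+k, k) - C(d+k+1-i, k) ). -/
/-!
Barycentric coordinates identify `conv C` with the standard simplex `Δ ⊆ ℝ^(d+1)`, the vertices
with the unit vectors `eᵢ`, and `kC` with the lattice points of `kΔ`; affine independence makes
this identification injective on every hyperplane `∑ xᵢ = const`, so `A + kC` may be counted in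
coordinates. A non-vertex `a ∈ A` has all coordinates in `[0, 1)`, hence `a + kC` consists of
`C(d+k, k)` points, and these meet no other translate. The `m = |A ∩ C|` vertices in `A`
contribute the lattice points of `(k+1)Δ` with a positive coordinate at one of them, i.e.
`C(d+k+1, k+1) - C(d+k+1-m, k+1)` points, which the hockey-stick identity rewrites as
`∑_{i=1}^m C(d+k+1-i, k)`.
-/

open Finset Pointwise

/-- `k`-fold Minkowski sum of a finite set (with `kfold 0 A = {0}`). -/
def kfold {E : Type*} [DecidableEq E] [AddMonoid E] : ℕ → Finset E → Finset E
  | 0, _ => {0}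
  | n + 1, A => kfold n A + A

lemma kfold_image {E F G : Type*} [DecidableEq E] [DecidableEq F] [AddMonoid E] [AddMonoid F]
    [FunLike G E F] [AddMonoidHomClass G E F] (f : G) (s : Finset E) (n : ℕ) :
    kfold n (s.image f) = (kfold n s).image f := by
  induction n with
  | zero => simp [kfold]
  | succ n ih => rw [kfold, kfold, ih, image_add]

lemma card_piAntidiag_nat {ι : Type*} [DecidableEq ι] (s : Finset ι) (n : ℕ) :
    #(s.piAntidiag n) = (#s + n - 1).choose n := by
  rw [← card_finsuppAntidiag_nat_eq_choose, finsuppAntidiag, card_map, card_attach]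

section piAntidiag

variable {ι : Type*} [Fintype ι] [DecidableEq ι]

lemma piAntidiag_add_image_single {s I : Finset ι} (hI : I ⊆ s) (n : ℕ) :
    s.piAntidiag n + I.image (Pi.single · 1) =
      {t ∈ s.piAntidiag (n + 1) | ∃ i ∈ I, t i ≠ 0} := by
  ext t
  simp only [mem_add, mem_image, mem_filter, mem_piAntidiag]
  constructor
  · rintro ⟨c, ⟨hc, hcs⟩, _, ⟨i, hi, rfl⟩, rfl⟩
    refine ⟨⟨?_, fun j hj => ?_⟩, i, hi, by simp⟩
    · simp [sum_add_distrib, hc, hI hi]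
    · by_cases hji : j = i
      · exact hji ▸ hI hi
      · exact hcs j (by simpa [hji] using hj)
  · rintro ⟨⟨ht, hts⟩, i, hi, hti⟩
    have hsplit : t - Pi.single i 1 + Pi.single i 1 = t := by
      funext j
      by_cases hji : j = i
      · subst hji
        simp only [Pi.add_apply, Pi.sub_apply, Pi.single_eq_same]
        omega
      · simp [hji]
    refine ⟨t - Pi.single i 1, ⟨?_, fun j hj => hts j ?_⟩, _, ⟨i, hi, rfl⟩, hsplit⟩
    · have : s.sum t = ∑ j ∈ s, (t - Pi.single i 1 : ι → ℕ) j + 1 := by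
        conv_lhs => rw [← hsplit]
        simp [sum_add_distrib, hI hi]
      change ∑ j ∈ s, (t - Pi.single i 1 : ι → ℕ) j = n
      omega
    · intro htj; simp [htj] at hj

lemma kfold_image_single (s : Finset ι) (n : ℕ) :
    kfold n (s.image (Pi.single · 1)) = s.piAntidiag n := by
  induction n with
  | zero => simp [kfold]
  | succ n ih =>
    rw [kfold, ih, piAntidiag_add_image_single subset_rfl, filter_true_of_mem]
    intro t ht
    exact exists_ne_zero_of_sum_ne_zero ((mem_piAntidiag.1 ht).1.trans_ne n.succ_ne_zero)

lemma filter_piAntidiag_eq_piAntidiag_sdiff (s I : Finset ι) (n : ℕ) :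
    {t ∈ s.piAntidiag n | ¬ ∃ i ∈ I, t i ≠ 0} = (s \ I).piAntidiag n := by
  ext t
  simp only [mem_filter, mem_piAntidiag, mem_sdiff, not_exists, not_and, not_not]
  constructor
  · rintro ⟨⟨ht, hts⟩, hI⟩
    have hzero : ∀ j ∈ s, j ∉ s \ I → t j = 0 := fun j hjs hj => hI j (by simpa [hjs] using hj)
    exact ⟨ht ▸ sum_subset sdiff_subset hzero, fun j hj => ⟨hts j hj, fun hjI => hj (hI j hjI)⟩⟩
  · rintro ⟨ht, hts⟩
    have hzero : ∀ j ∈ s, j ∉ s \ I → t j = 0 := fun j hjs hj =>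
      by_contra fun htj => hj (mem_sdiff.2 ⟨hjs, (hts j htj).2⟩)
    exact ⟨⟨ht ▸ (sum_subset sdiff_subset hzero).symm, fun j hj => (hts j hj).1⟩,
      fun j hjI => by_contra fun htj => (hts j htj).2 hjI⟩

end piAntidiag

lemma sum_Icc_choose_sub_add_choose {N m : ℕ} (hm : m ≤ N) (k : ℕ) :
    ∑ i ∈ Icc 1 m, (N - i).choose k + (N - m).choose (k + 1) = N.choose (k + 1) := by
  induction m with
  | zero => simp
  | succ m ih =>
    rw [sum_Icc_succ_top (by omega), ← ih (by omega), add_assoc]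
    congr 1
    obtain ⟨j, hj⟩ : ∃ j, N - m = j + 1 := ⟨N - (m + 1), by omega⟩
    rw [hj, Nat.choose_succ_succ', show N - (m + 1) = j by omega]

lemma natCast_compLeft_injective {R ι : Type*} [AddMonoidWithOne R] [CharZero R] :
    Function.Injective ((Nat.castAddMonoidHom R).compLeft ι) :=
  fun c c' h => funext fun i => by simpa using congrFun h i

def stdSimplexVertices (𝕜 ι : Type*) [Zero 𝕜] [One 𝕜] [DecidableEq 𝕜] [Fintype ι] [DecidableEq ι] :
    Finset (ι → 𝕜) :=
  univ.image (Pi.single · 1)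

section stdSimplex

variable {𝕜 ι : Type*} [Field 𝕜] [LinearOrder 𝕜] [IsStrictOrderedRing 𝕜] [Fintype ι]
  [DecidableEq ι]

lemma eq_single_of_mem_stdSimplex_of_apply_eq_one {w : ι → 𝕜} (hw : w ∈ stdSimplex 𝕜 ι) {i : ι}
    (hi : w i = 1) : w = Pi.single i 1 := by
  funext j
  obtain rfl | hji := eq_or_ne j i
  · simp [hi]
  · have := add_le_sum (fun j _ => hw.1 j) (mem_univ i) (mem_univ j) hji.symm
    rw [hw.2, hi] at this
    simp only [Pi.single_apply, hji, if_false]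
    exact le_antisymm (by linarith) (hw.1 j)

variable [DecidableEq 𝕜]

lemma image_single_eq_image_natCast (I : Finset ι) :
    I.image (Pi.single · (1 : 𝕜)) =
      (I.image (Pi.single · 1)).image ((Nat.castAddMonoidHom 𝕜).compLeft ι) := by
  rw [image_image]
  refine image_congr fun i _ => ?_
  funext j
  simp [Pi.single_apply]

lemma kfold_stdSimplexVertices (n : ℕ) :
    kfold n (stdSimplexVertices 𝕜 ι) =
      (univ.piAntidiag n).image ((Nat.castAddMonoidHom 𝕜).compLeft ι) := by
  rw [stdSimplexVertices, image_single_eq_image_natCast, kfold_image, kfold_image_single]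

lemma card_kfold_stdSimplexVertices (n : ℕ) :
    #(kfold n (stdSimplexVertices 𝕜 ι)) = (Fintype.card ι + n - 1).choose n := by
  rw [kfold_stdSimplexVertices, card_image_of_injective _ natCast_compLeft_injective,
    card_piAntidiag_nat, card_univ]

lemma stdSimplexVertices_subset_stdSimplex :
    ↑(stdSimplexVertices 𝕜 ι) ⊆ stdSimplex 𝕜 ι := by
  simp [stdSimplexVertices, Set.range_subset_iff, single_mem_stdSimplex]

lemma sum_eq_of_mem_kfold_stdSimplexVertices {n : ℕ} {x : ι → 𝕜}
    (hx : x ∈ kfold n (stdSimplexVertices 𝕜 ι)) : ∑ i, x i = n := by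
  rw [kfold_stdSimplexVertices] at hx
  obtain ⟨c, hc, rfl⟩ := mem_image.1 hx
  simp [← (mem_piAntidiag.1 hc).1]

lemma eq_of_add_natCast_eq_add_natCast {w w' : ι → 𝕜} (hw : w ∈ stdSimplex 𝕜 ι)
    (hw' : w' ∈ stdSimplex 𝕜 ι) (hvert : w ∉ stdSimplexVertices 𝕜 ι) {c c' : ι → ℕ}
    (h : w + Nat.cast ∘ c = w' + Nat.cast ∘ c') : w = w' := by
  have hle : ∀ i ∈ univ, w i ≤ w' i := by
    -- otherwise `w i - w' i` is a positive integer, which forces the vertex `w i = 1`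
    intro i _
    by_contra! hlt
    have hi := congrFun h i
    simp only [Pi.add_apply, Function.comp_apply] at hi
    have hc : c i + 1 ≤ c' i := by exact_mod_cast (show (c i : 𝕜) < c' i by linarith)
    have hc' : (c i : 𝕜) + 1 ≤ c' i := by exact_mod_cast hc
    have hwi : w i = 1 := le_antisymm (mem_Icc_of_mem_stdSimplex hw i).2 (by linarith [hw'.1 i])
    exact hvert (mem_image.2
      ⟨i, mem_univ i, (eq_single_of_mem_stdSimplex_of_apply_eq_one hw hwi).symm⟩)
  funext i
  exact (sum_eq_sum_iff_of_le hle).1 (hw.2.trans hw'.2.symm) i (mem_univ i)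

lemma card_add_kfold_stdSimplexVertices_eq {W : Finset (ι → 𝕜)} (hW : ↑W ⊆ stdSimplex 𝕜 ι)
    (k : ℕ) : #(W + kfold k (stdSimplexVertices 𝕜 ι)) =
      #(W \ stdSimplexVertices 𝕜 ι) * #(kfold k (stdSimplexVertices 𝕜 ι)) +
        #(W ∩ stdSimplexVertices 𝕜 ι + kfold k (stdSimplexVertices 𝕜 ι)) := by
  set V := stdSimplexVertices 𝕜 ι
  have key : ∀ w ∈ W \ V, ∀ w' ∈ W, ∀ x ∈ kfold k V, ∀ x' ∈ kfold k V,
      w + x = w' + x' → w = w' := by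
    intro w hw w' hw' x hx x' hx' h
    rw [kfold_stdSimplexVertices] at hx hx'
    obtain ⟨c, -, rfl⟩ := mem_image.1 hx
    obtain ⟨c', -, rfl⟩ := mem_image.1 hx'
    exact eq_of_add_natCast_eq_add_natCast (hW (mem_sdiff.1 hw).1) (hW hw') (mem_sdiff.1 hw).2 h
  have hinj : Set.InjOn (fun p => p.1 + p.2) (↑(W \ V) ×ˢ ↑(kfold k V) : Set ((ι → 𝕜) × _)) := by
    rintro ⟨w, x⟩ ⟨hw, hx⟩ ⟨w', x'⟩ ⟨hw', hx'⟩ h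
    obtain rfl := key w hw w' (mem_sdiff.1 hw').1 x hx x' hx' h
    exact Prod.ext rfl (add_left_cancel h)
  have hdisj : Disjoint (W \ V + kfold k V) (W ∩ V + kfold k V) := by
    refine disjoint_left.2 fun y hy hy' => ?_
    obtain ⟨w, hw, x, hx, rfl⟩ := mem_add.1 hy
    obtain ⟨w', hw', x', hx', h⟩ := mem_add.1 hy'
    obtain rfl := key w hw w' (mem_inter.1 hw').1 x hx x' hx' h.symm
    exact (mem_sdiff.1 hw).2 (mem_inter.1 hw').2
  rw [← card_add_iff.2 hinj, ← card_union_of_disjoint hdisj, ← union_add, sdiff_union_inter]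

lemma card_image_single_add_kfold_stdSimplexVertices (I : Finset ι) (k : ℕ) :
    #(I.image (Pi.single · (1 : 𝕜)) + kfold k (stdSimplexVertices 𝕜 ι)) +
      #((univ \ I).piAntidiag (k + 1) : Finset (ι → ℕ)) = (Fintype.card ι + k).choose (k + 1) := by
  rw [kfold_stdSimplexVertices, image_single_eq_image_natCast, ← image_add,
    card_image_of_injective _ natCast_compLeft_injective, add_comm (I.image _),
    piAntidiag_add_image_single (subset_univ I), ← filter_piAntidiag_eq_piAntidiag_sdiff,
    card_filter_add_card_filter_not, card_piAntidiag_nat, card_univ, Nat.add_succ_sub_one]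

lemma card_add_kfold_stdSimplexVertices {W : Finset (ι → 𝕜)} (hW : ↑W ⊆ stdSimplex 𝕜 ι)
    (k : ℕ) : #(W + kfold k (stdSimplexVertices 𝕜 ι)) =
      #(W \ stdSimplexVertices 𝕜 ι) * (Fintype.card ι + k - 1).choose k +
        ∑ i ∈ Icc 1 #(W ∩ stdSimplexVertices 𝕜 ι), (Fintype.card ι + k - i).choose k := by
  obtain ⟨I, -, hI⟩ := subset_image_iff.1 (inter_subset_right : W ∩ stdSimplexVertices 𝕜 ι ⊆ _)
  have hIcard : #(W ∩ stdSimplexVertices 𝕜 ι) = #I := by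
    rw [← hI, card_image_of_injective]
    exact fun i j h => by simpa [Pi.single_apply, eq_comm] using congrFun h j
  have hvert := card_image_single_add_kfold_stdSimplexVertices (𝕜 := 𝕜) I k
  have hhockey := sum_Icc_choose_sub_add_choose (N := Fintype.card ι + k) (m := #I)
    (by have := I.card_le_univ; omega) k
  rw [card_add_kfold_stdSimplexVertices_eq hW, card_kfold_stdSimplexVertices, hIcard, ← hI]
  rw [card_piAntidiag_nat, card_univ_sdiff, show Fintype.card ι - #I + (k + 1) - 1 =
    Fintype.card ι + k - #I by have := I.card_le_univ; omega] at hvert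
  omega

end stdSimplex

section AffineIndependent

variable {𝕜 ι E : Type*} [Fintype ι] [AddCommGroup E]

lemma AffineIndependent.injOn_linearCombination [Ring 𝕜] [Module 𝕜 E] {v : ι → E}
    (hv : AffineIndependent 𝕜 v) (s : 𝕜) :
    Set.InjOn (Fintype.linearCombination 𝕜 v) {x | ∑ i, x i = s} :=
  fun _ hx _ hy hxy => funext fun i =>
    hv.eq_of_sum_eq_sum (s := univ) (hx.trans hy.symm) hxy i (mem_univ i)

lemma image_linearCombination_stdSimplexVertices [Ring 𝕜] [Module 𝕜 E] [DecidableEq 𝕜]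
    [DecidableEq ι] [DecidableEq E] (v : ι → E) :
    (stdSimplexVertices 𝕜 ι).image (Fintype.linearCombination 𝕜 v) = univ.image v := by
  simp [stdSimplexVertices, image_image, Function.comp_def]

variable [Field 𝕜] [LinearOrder 𝕜] [IsStrictOrderedRing 𝕜] [Module 𝕜 E] [DecidableEq ι]

lemma convexHull_range_eq_image_stdSimplex (v : ι → E) :
    convexHull 𝕜 (Set.range v) = Fintype.linearCombination 𝕜 v '' stdSimplex 𝕜 ι := by
  rw [← convexHull_rangle_single_eq_stdSimplex, LinearMap.image_convexHull, ← Set.range_comp]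
  congr 2
  funext i
  simp

variable [DecidableEq 𝕜] [DecidableEq E]

theorem AffineIndependent.card_add_kfold_image {v : ι → E} (hv : AffineIndependent 𝕜 v)
    {A : Finset E} (hA : ↑A ⊆ convexHull 𝕜 (Set.range v)) (k : ℕ) :
    (#(A + kfold k (univ.image v)) : ℤ) = (Fintype.card ι + k - 1).choose k * #A -
      ∑ i ∈ Icc 1 #(A ∩ univ.image v),
        (((Fintype.card ι + k - 1).choose k : ℤ) - (Fintype.card ι + k - i).choose k) := by
  rw [convexHull_range_eq_image_stdSimplex] at hA
  obtain ⟨W, hWΔ, rfl⟩ := subset_set_image_iff.1 hA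
  set L := Fintype.linearCombination 𝕜 v
  have hinjΔ : Set.InjOn L (stdSimplex 𝕜 ι) := (hv.injOn_linearCombination 1).mono fun x hx => hx.2
  have hsum : ↑(W + kfold k (stdSimplexVertices 𝕜 ι)) ⊆ {x : ι → 𝕜 | ∑ i, x i = 1 + k} := by
    intro y hy
    obtain ⟨w, hw, x, hx, rfl⟩ := mem_add.1 hy
    simp [sum_add_distrib, (hWΔ hw).2, sum_eq_of_mem_kfold_stdSimplexVertices hx]
  rw [← image_linearCombination_stdSimplexVertices (𝕜 := 𝕜), kfold_image, ← image_add,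
    ← image_inter_of_injOn _ _ (hinjΔ.mono (by simp [hWΔ, stdSimplexVertices_subset_stdSimplex])),
    card_image_of_injOn ((hv.injOn_linearCombination _).mono hsum),
    card_image_of_injOn (hinjΔ.mono hWΔ),
    card_image_of_injOn (hinjΔ.mono ((coe_subset.2 inter_subset_left).trans hWΔ)),
    card_add_kfold_stdSimplexVertices hWΔ, ← card_sdiff_add_card_inter W (stdSimplexVertices 𝕜 ι)]
  simp only [Nat.cast_add, Nat.cast_mul, Nat.cast_sum, sum_sub_distrib, sum_const, Nat.card_Icc,
    nsmul_eq_mul, Nat.add_sub_cancel]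
  ring

end AffineIndependent

theorem stmt_6_general (d k : ℕ) (v : Fin (d + 1) → (Fin d → ℝ))
    (hv : AffineIndependent ℝ v) (A : Finset (Fin d → ℝ))
    (hA : (A : Set (Fin d → ℝ)) ⊆ convexHull ℝ (Set.range v)) :
    ((A + kfold k (Finset.image v Finset.univ)).card : ℤ) =
      (d + k).choose k * A.card -
        ∑ i ∈ Finset.Icc 1 (A ∩ Finset.image v Finset.univ).card,
          (((d + k).choose k : ℤ) - (d + k + 1 - i).choose k) := by
  simpa [add_right_comm d 1 k] using hv.card_add_kfold_image hA k

/-- If `C` is the vertex set of a `d`-simplex and `A ⊆ conv C`, then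
`|A + kC| = C(d+k,k)|A| - Σ_{i=1}^{|A∩C|} (C(d+k,k) - C(d+k+1-i,k))`. -/
theorem stmt_6 (d k : ℕ) (hk : 1 ≤ k) (v : Fin (d + 1) → (Fin d → ℝ))
    (hv : AffineIndependent ℝ v) (A : Finset (Fin d → ℝ))
    (hA : (A : Set (Fin d → ℝ)) ⊆ convexHull ℝ (Set.range v)) :
    ((A + kfold k (Finset.image v Finset.univ)).card : ℤ) =
      (d + k).choose k * A.card -
        ∑ i ∈ Finset.Icc 1 (A ∩ Finset.image v Finset.univ).card,
          (((d + k).choose k : ℤ) - (d + k + 1 - i).choose k) :=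
  stmt_6_general d k v hv A hA
end

section
/- Let A, B ⊆ ℝ be finite with A ⊆ conv(B) = [0,1]. If A is stable with respect to B, i.e. (A + Λ(B)) ∩ [0,1] = A where Λ(B) is the subgroup of ℝ generated by B - B, then A + kB = A + k{0,1} for every k ≥ 1. -/
open Finset Pointwise

lemma kfold_mono {A B : Finset ℝ} (h : A ⊆ B) : ∀ k, kfold k A ⊆ kfold k B
  | 0 => Finset.Subset.refl _
  | n + 1 => Finset.add_subset_add (kfold_mono h n) h

lemma coe_mem_kfold01 : ∀ k j : ℕ, j ≤ k → (j : ℝ) ∈ kfold k ({0, 1} : Finset ℝ)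
  | 0, j, h => by
    simp [kfold, Nat.le_zero.mp h]
  | k + 1, j, h => by
    rcases Nat.lt_or_ge j (k + 1) with h' | h'
    · have hm := coe_mem_kfold01 k j (Nat.lt_succ_iff.mp h')
      show (j : ℝ) ∈ kfold k _ + _
      rw [Finset.mem_add]
      exact ⟨(j : ℝ), hm, 0, by simp, by ring⟩
    · have hj : j = k + 1 := le_antisymm h h'
      subst hj
      show ((k + 1 : ℕ) : ℝ) ∈ kfold k _ + _
      rw [Finset.mem_add]
      exact ⟨(k : ℝ), coe_mem_kfold01 k k le_rfl, 1, by simp, by push_cast; ring⟩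

lemma kfold_prop {B : Finset ℝ} (h0 : (0:ℝ) ∈ B) (hsub : ∀ b ∈ B, b ∈ Set.Icc (0:ℝ) 1) :
    ∀ k, ∀ x ∈ kfold k B,
      x ∈ Set.Icc (0:ℝ) (k : ℝ) ∧
        x ∈ AddSubgroup.closure ((B : Set ℝ) - (B : Set ℝ))
  | 0, x, hx => by
    have : x = 0 := by simpa [kfold] using hx
    subst this
    exact ⟨by simp, zero_mem _⟩
  | k + 1, x, hx => by
    rw [show kfold (k+1) B = kfold k B + B from rfl, Finset.mem_add] at hx
    obtain ⟨y, hy, b, hb, rfl⟩ := hx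
    obtain ⟨⟨hy0, hy1⟩, hyΛ⟩ := kfold_prop h0 hsub k y hy
    obtain ⟨hb0, hb1⟩ := hsub b hb
    have hbΛ : b ∈ AddSubgroup.closure ((B : Set ℝ) - (B : Set ℝ)) := by
      have : b - 0 ∈ ((B : Set ℝ) - (B : Set ℝ)) := Set.sub_mem_sub hb h0
      simpa using AddSubgroup.subset_closure this
    refine ⟨⟨by linarith, ?_⟩, add_mem hyΛ hbΛ⟩
    push_cast
    linarith

/-- If `A ⊆ conv B = [0,1]` is stable with respect to `B`, i.e.
`(A + Λ(B)) ∩ [0,1] = A` with `Λ(B)` the group generated by `B - B`, then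
`A + kB = A + k{0,1}` for every `k ≥ 1`. -/
theorem stmt_19 (A B : Finset ℝ)
    (hB : convexHull ℝ (B : Set ℝ) = Set.Icc 0 1)
    (hA : (A : Set ℝ) ⊆ convexHull ℝ (B : Set ℝ))
    (hstab : ((A : Set ℝ) +
        (AddSubgroup.closure ((B : Set ℝ) - (B : Set ℝ)) : Set ℝ)) ∩
        Set.Icc (0 : ℝ) 1 = (A : Set ℝ))
    (k : ℕ) (hk : 1 ≤ k) :
    A + kfold k B = A + kfold k ({0, 1} : Finset ℝ) := by
  -- B is nonempty
  have hne : B.Nonempty := by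
    rcases B.eq_empty_or_nonempty with h | h
    · exfalso
      rw [h] at hB
      simp at hB
      exact absurd hB.symm (Set.nonempty_Icc.mpr zero_le_one).ne_empty
    · exact h
  have hBsub : ∀ b ∈ B, b ∈ Set.Icc (0:ℝ) 1 := fun b hb => by
    rw [← hB]; exact subset_convexHull ℝ _ hb
  -- min and max
  have hhull : convexHull ℝ (B : Set ℝ) ⊆ Set.Icc (B.min' hne) (B.max' hne) :=
    convexHull_min (fun b hb => ⟨B.min'_le b hb, B.le_max' b hb⟩) (convex_Icc _ _)
  have h0B : (0:ℝ) ∈ B := by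
    have h1 : (0:ℝ) ∈ Set.Icc (B.min' hne) (B.max' hne) := hhull (hB ▸ Set.left_mem_Icc.mpr zero_le_one)
    have h2 := (hBsub _ (B.min'_mem hne)).1
    have : B.min' hne = 0 := le_antisymm h1.1 h2
    exact this ▸ B.min'_mem hne
  have h1B : (1:ℝ) ∈ B := by
    have h1 : (1:ℝ) ∈ Set.Icc (B.min' hne) (B.max' hne) := hhull (hB ▸ Set.right_mem_Icc.mpr zero_le_one)
    have h2 := (hBsub _ (B.max'_mem hne)).2
    have : B.max' hne = 1 := le_antisymm h2 h1.2
    exact this ▸ B.max'_mem hne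
  have h1Λ : (1:ℝ) ∈ AddSubgroup.closure ((B : Set ℝ) - (B : Set ℝ)) := by
    have : (1:ℝ) - 0 ∈ ((B : Set ℝ) - (B : Set ℝ)) := Set.sub_mem_sub h1B h0B
    simpa using AddSubgroup.subset_closure this
  apply Finset.Subset.antisymm
  · intro x hx
    rw [Finset.mem_add] at hx
    obtain ⟨a, ha, b, hb, rfl⟩ := hx
    obtain ⟨⟨hb0, hbk⟩, hbΛ⟩ := kfold_prop h0B hBsub k b hb
    obtain ⟨ha0, ha1⟩ : a ∈ Set.Icc (0:ℝ) 1 := by rw [← hB]; exact hA (Finset.mem_coe.mpr ha)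
    set j : ℕ := min ⌊a + b⌋₊ k with hj
    have hjk : j ≤ k := min_le_right _ _
    have hs0 : (0:ℝ) ≤ a + b := by linarith
    have hjle : (j : ℝ) ≤ a + b := by
      calc (j : ℝ) ≤ (⌊a + b⌋₊ : ℝ) := by exact_mod_cast min_le_left _ _
        _ ≤ a + b := Nat.floor_le hs0
    have hsle : a + b ≤ (j : ℝ) + 1 := by
      rcases le_or_gt ⌊a + b⌋₊ k with h | h
      · have : j = ⌊a + b⌋₊ := min_eq_left h
        rw [this]
        exact le_of_lt (Nat.lt_floor_add_one _)
      · have hjk' : j = k := min_eq_right (le_of_lt h)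
        rw [hjk']
        linarith
    -- a + b - j ∈ A by stability
    have hmem : a + b - (j : ℝ) ∈ (A : Set ℝ) := by
      rw [← hstab]
      constructor
      · have hjΛ : (j : ℝ) ∈ AddSubgroup.closure ((B : Set ℝ) - (B : Set ℝ)) := by
          have := AddSubgroup.nsmul_mem _ h1Λ j
          simpa using this
        exact ⟨a, Finset.mem_coe.mpr ha, b - (j : ℝ), sub_mem hbΛ hjΛ, by ring⟩
      · exact ⟨by linarith, by linarith⟩
    rw [Finset.mem_add]
    exact ⟨a + b - (j : ℝ), Finset.mem_coe.mp hmem, (j : ℝ),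
      coe_mem_kfold01 k j hjk, by ring⟩
  · apply Finset.add_subset_add_left
    apply kfold_mono
    intro x hx
    simp only [Finset.mem_insert, Finset.mem_singleton] at hx
    rcases hx with rfl | rfl
    · exact h0B
    · exact h1B
end
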